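/- arXiv:1807.11194 — 2 statements merged into one kernel-verified Lean document; each statement's English description precedes it below -/
import Mathlib

section
/- For every a ∈ I, the family (Ω_a)_{a∈I} with Ω_a := ∏_{α∈Φ⁺} (1 − e^{−α})^{−[α]_a} ∈ K satisfies the relation (1 − e^{α_a})(1 − e^{−α_a}) · Ω_a · s_a(Ω_a) = ∏_{b : C_{ab} < 0} (Ω_b)^{−C_{ab}}, an identity in the field K. -/
/-- `ℤ[Q]` (here realized inside the group algebra `ℤ[V]` of the ambient vector space)
is an integral domain. -/
instance addMonoidAlgebraIsDomain
    {V : Type*} [AddCommGroup V] [Module ℚ V] : IsDomain (AddMonoidAlgebra ℤ V) :=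
  NoZeroDivisors.to_isDomain _

/-- The exponential `e^v`, viewed in the fraction field `K` of the group algebra. -/
noncomputable def expK {V : Type*} [AddCommGroup V] [Module ℚ V] (v : V) :
    FractionRing (AddMonoidAlgebra ℤ V) :=
  algebraMap (AddMonoidAlgebra ℤ V) _ (AddMonoidAlgebra.single v 1)

/-- The field automorphism of `K` induced by an additive automorphism `e` of `V`
via `e^v ↦ e^{e(v)}`; this is how the Weyl group acts on `K`. -/
noncomputable def weylAutK {V : Type*} [AddCommGroup V] [Module ℚ V] (e : V ≃+ V) :
    FractionRing (AddMonoidAlgebra ℤ V) ≃+* FractionRing (AddMonoidAlgebra ℤ V) :=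
  IsFractionRing.ringEquivOfRingEquiv (AddMonoidAlgebra.domCongr ℤ ℤ e).toRingEquiv

/-
Write `x_α = 1 - e^{-α}`, so that `Ω_a = ∏_{α > 0} x_α^{-[α]_a}`. The reflection `s_a` sends `α_a`
to `-α_a` and permutes the other positive roots, so after reindexing, the left-hand side is the
product over `β ∈ Φ⁺ ∖ {α_a}` of `x_β^{-[β]_a - [s_a β]_a}`: the prefactor cancels the two factors
coming from `α_a`. Since `[s_a β]_a = [β]_a - ⟨β, α_a^∨⟩ = [β]_a - ∑_b [β]_b C_{ab}` and
`C_{aa} = 2`, the exponent is `∑_{b ≠ a} [β]_b C_{ab}`, which is the exponent of `x_β` on the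
right-hand side (`C_{ab} ≤ 0` off the diagonal); there `x_{α_a}` has exponent `0`.
-/

open Finset

theorem zpow_sum₀ {G ι : Type*} [CommGroupWithZero G] {x : G} (hx : x ≠ 0) (s : Finset ι)
    (f : ι → ℤ) : x ^ (∑ i ∈ s, f i) = ∏ i ∈ s, x ^ f i := by
  classical
  induction s using Finset.induction_on with
  | empty => simp
  | insert i s hi ih => rw [sum_insert hi, prod_insert hi, zpow_add₀ hx, ih]

theorem prod_prod_zpow_zpow {G ι κ : Type*} [CommGroupWithZero G] {s : Finset ι} {x : ι → G}
    (hx : ∀ i ∈ s, x i ≠ 0) (t : Finset κ) (f : ι → κ → ℤ) (g : κ → ℤ) :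
    ∏ j ∈ t, (∏ i ∈ s, x i ^ f i j) ^ g j = ∏ i ∈ s, x i ^ ∑ j ∈ t, f i j * g j := by
  simp_rw [← prod_zpow, ← zpow_mul]
  rw [prod_comm]
  exact prod_congr rfl fun i hi => (zpow_sum₀ (hx i hi) t _).symm

theorem sum_filter_cartan_neg {I : Type*} [Fintype I] {C : I → I → ℤ}
    (hCdiag : ∀ a, C a a = 2) (hCoff : ∀ a b, a ≠ b → C a b ≤ 0) (a : I) (f : I → ℤ) :
    ∑ b ∈ univ.filter (fun b => C a b < 0), f b * C a b = ∑ b, f b * C a b - 2 * f a := by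
  classical
  have hterm : ∀ b, (if C a b < 0 then f b * C a b else 0)
      = f b * C a b - if a = b then 2 * f a else 0 := by
    intro b
    rcases eq_or_ne a b with rfl | hab
    · simp [hCdiag, mul_comm]
    · rw [if_neg hab]
      split_ifs with hneg
      · ring
      · rw [le_antisymm (hCoff a b hab) (not_lt.1 hneg)]
        ring
  rw [sum_filter, sum_congr rfl fun b _ => hterm b, sum_sub_distrib, sum_ite_eq,
    if_pos (mem_univ a)]

section Exponentials

variable {V : Type*} [AddCommGroup V] [Module ℚ V]

theorem expK_injective : Function.Injective (expK : V → FractionRing (AddMonoidAlgebra ℤ V)) :=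
  (IsFractionRing.injective _ _).comp (AddMonoidAlgebra.single_left_injective one_ne_zero)

theorem expK_zero : expK (0 : V) = 1 := by
  rw [expK, ← AddMonoidAlgebra.one_def, map_one]

theorem one_sub_expK_ne_zero {v : V} (hv : v ≠ 0) :
    (1 : FractionRing (AddMonoidAlgebra ℤ V)) - expK v ≠ 0 := by
  rw [sub_ne_zero, ← expK_zero]
  exact fun h => hv (expK_injective h).symm

theorem weylAutK_expK (e : V ≃+ V) (v : V) : weylAutK e (expK v) = expK (e v) := by
  rw [weylAutK, expK, expK, IsFractionRing.ringEquivOfRingEquiv_algebraMap]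
  simp [AddMonoidAlgebra.domCongr_single]

theorem weylAutK_prod_one_sub_expK_neg_zpow (e : V ≃+ V) (S : Finset V) (n : V → ℤ) :
    weylAutK e (∏ α ∈ S, (1 - expK (-α)) ^ n α) = ∏ α ∈ S, (1 - expK (-e α)) ^ n α := by
  simp [map_prod, map_zpow₀, weylAutK_expK]

theorem weylAutK_prod_one_sub_expK_neg_zpow_of_reflection [DecidableEq V] {e : V ≃+ V}
    {S : Finset V} {α₀ : V} (hα₀ : α₀ ∈ S) (he : e α₀ = -α₀) (hinv : Function.Involutive e)
    (hmaps : ∀ β ∈ S.erase α₀, e β ∈ S.erase α₀) (n : V → ℤ) :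
    weylAutK e (∏ α ∈ S, (1 - expK (-α)) ^ n α)
      = (1 - expK α₀) ^ n α₀ * ∏ β ∈ S.erase α₀, (1 - expK (-β)) ^ n (e β) := by
  rw [weylAutK_prod_one_sub_expK_neg_zpow, ← mul_prod_erase _ _ hα₀, he, neg_neg]
  congr 1
  exact prod_nbij' e e hmaps hmaps (fun β _ => hinv β) (fun β _ => hinv β)
    (fun β _ => by rw [hinv β])

end Exponentials

section RootCoefficients

variable {I V : Type*} [Fintype I] [AddCommGroup V] [Module ℚ V]
  {Φ Φpos : Finset V} {sroot : I → V} {coeff : V → I → ℤ}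

theorem coeff_eq_of_eq_sum (hindep : LinearIndependent ℚ sroot)
    (hcoeff : ∀ β ∈ Φ, β = ∑ b, coeff β b • sroot b) {β : V} (hβ : β ∈ Φ) {d : I → ℤ}
    (hd : β = ∑ b, d b • sroot b) : coeff β = d :=
  funext <| Fintype.linearIndependent_iffₛ.1 (hindep.restrict_scalars' ℤ) _ _ <|
    (hcoeff β hβ).symm.trans hd

theorem coeff_sroot [DecidableEq I] (hindep : LinearIndependent ℚ sroot)
    (hcoeff : ∀ β ∈ Φ, β = ∑ b, coeff β b • sroot b) {a : I} (ha : sroot a ∈ Φ) :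
    coeff (sroot a) = Pi.single a 1 :=
  coeff_eq_of_eq_sum hindep hcoeff ha <| by simp [Pi.single_apply]

theorem coeff_neg (hindep : LinearIndependent ℚ sroot)
    (hcoeff : ∀ β ∈ Φ, β = ∑ b, coeff β b • sroot b) {β : V} (hβ : β ∈ Φ) (hnβ : -β ∈ Φ) :
    coeff (-β) = -coeff β :=
  coeff_eq_of_eq_sum hindep hcoeff hnβ <| by
    simp only [Pi.neg_apply, neg_smul, sum_neg_distrib, ← hcoeff β hβ]

theorem neg_notMem_of_mem_pos (hindep : LinearIndependent ℚ sroot)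
    (hcoeff : ∀ β ∈ Φ, β = ∑ b, coeff β b • sroot b) (hpossub : Φpos ⊆ Φ) (hzero : (0 : V) ∉ Φ)
    (hnonneg : ∀ β ∈ Φpos, ∀ b, 0 ≤ coeff β b) {β : V} (hβ : β ∈ Φpos) : -β ∉ Φpos := by
  intro hnβ
  have hcoeff_zero : ∀ b, coeff β b = 0 := fun b => by
    have hneg := hnonneg _ hnβ b
    rw [coeff_neg hindep hcoeff (hpossub hβ) (hpossub hnβ), Pi.neg_apply] at hneg
    linarith [hnonneg _ hβ b]
  have hβ_zero : β = 0 := by rw [hcoeff β (hpossub hβ)]; simp [hcoeff_zero]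
  exact hzero (hβ_zero ▸ hpossub hβ)

end RootCoefficients

section Reflections

variable {I V : Type*} [AddCommGroup V] [Module ℚ V]
  {Φ : Finset V} {sroot : I → V} {cpair : I → V →ₗ[ℚ] ℚ} {coeff : V → I → ℤ}
  {C : I → I → ℤ} {s : I → V ≃ₗ[ℚ] V} {a : I}

theorem reflection_sroot_self (hC : ∀ a b, (C a b : ℚ) = cpair a (sroot b))
    (hCdiag : ∀ a, C a a = 2) (hs : ∀ a v, s a v = v - cpair a v • sroot a) :
    s a (sroot a) = -sroot a := by
  rw [hs, ← hC, hCdiag, Int.cast_ofNat, two_smul]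
  abel

theorem reflection_involutive (hC : ∀ a b, (C a b : ℚ) = cpair a (sroot b))
    (hCdiag : ∀ a, C a a = 2) (hs : ∀ a v, s a v = v - cpair a v • sroot a) :
    Function.Involutive (s a) := fun v => by
  rw [hs a v, map_sub, map_smul, reflection_sroot_self hC hCdiag hs, hs a v, smul_neg,
    sub_neg_eq_add, sub_add_cancel]

variable [Fintype I]

theorem reflection_eq_sub_zsmul (hC : ∀ a b, (C a b : ℚ) = cpair a (sroot b))
    (hs : ∀ a v, s a v = v - cpair a v • sroot a)
    (hcoeff : ∀ β ∈ Φ, β = ∑ b, coeff β b • sroot b) {β : V} (hβ : β ∈ Φ) :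
    s a β = β - (∑ b, coeff β b * C a b) • sroot a := by
  have hpair : cpair a β = ((∑ b, coeff β b * C a b : ℤ) : ℚ) := by
    conv_lhs => rw [hcoeff β hβ]
    simp [map_sum, hC]
  rw [hs, hpair, Int.cast_smul_eq_zsmul]

theorem coeff_reflection [DecidableEq I] (hindep : LinearIndependent ℚ sroot)
    (hC : ∀ a b, (C a b : ℚ) = cpair a (sroot b)) (hs : ∀ a v, s a v = v - cpair a v • sroot a)
    (hcoeff : ∀ β ∈ Φ, β = ∑ b, coeff β b • sroot b) (hsΦ : ∀ a, ∀ β ∈ Φ, s a β ∈ Φ) {β : V}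
    (hβ : β ∈ Φ) :
    coeff (s a β) = coeff β - (∑ b, coeff β b * C a b) • Pi.single a 1 :=
  coeff_eq_of_eq_sum hindep hcoeff (hsΦ a β hβ) <| by
    simp [reflection_eq_sub_zsmul hC hs hcoeff hβ, sub_smul, sum_sub_distrib, Pi.single_apply,
      ← hcoeff β hβ]

theorem coeff_add_coeff_reflection_self (hindep : LinearIndependent ℚ sroot)
    (hC : ∀ a b, (C a b : ℚ) = cpair a (sroot b)) (hCdiag : ∀ a, C a a = 2)
    (hCoff : ∀ a b, a ≠ b → C a b ≤ 0) (hs : ∀ a v, s a v = v - cpair a v • sroot a)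
    (hcoeff : ∀ β ∈ Φ, β = ∑ b, coeff β b • sroot b) (hsΦ : ∀ a, ∀ β ∈ Φ, s a β ∈ Φ)
    {β : V} (hβ : β ∈ Φ) :
    coeff β a + coeff (s a β) a = -∑ b ∈ univ.filter (fun b => C a b < 0), coeff β b * C a b := by
  classical
  rw [coeff_reflection hindep hC hs hcoeff hsΦ hβ, sum_filter_cartan_neg hCdiag hCoff]
  simp only [Pi.sub_apply, Pi.smul_apply, Pi.single_eq_same, smul_eq_mul, mul_one]
  ring

end Reflections

section PositiveRoots

variable {I V : Type*} [Fintype I] [AddCommGroup V] [Module ℚ V]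
  {Φ Φpos : Finset V} {sroot : I → V} {cpair : I → V →ₗ[ℚ] ℚ} {coeff : V → I → ℤ}
  {C : I → I → ℤ} {s : I → V ≃ₗ[ℚ] V} {a : I}

theorem exists_ne_coeff_pos_of_ne_sroot (hindep : LinearIndependent ℚ sroot)
    (hsimple : ∀ a, sroot a ∈ Φpos) (hpossub : Φpos ⊆ Φ) (hzero : (0 : V) ∉ Φ)
    (hcoeff : ∀ β ∈ Φ, β = ∑ b, coeff β b • sroot b) (hnonneg : ∀ β ∈ Φpos, ∀ b, 0 ≤ coeff β b)
    (hred : ∀ β ∈ Φ, ∀ t : ℚ, t • β ∈ Φ → t = 1 ∨ t = -1) {β : V} (hβ : β ∈ Φpos)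
    (hne : β ≠ sroot a) : ∃ b ≠ a, 0 < coeff β b := by
  by_contra! hle
  have hβ_eq : β = (coeff β a : ℚ) • sroot a := by
    conv_lhs => rw [hcoeff β (hpossub hβ)]
    rw [sum_eq_single a (fun b _ hb => by rw [le_antisymm (hle b hb) (hnonneg β hβ b), zero_smul])
      (by simp), Int.cast_smul_eq_zsmul]
  rcases hred _ (hpossub (hsimple a)) _ (hβ_eq ▸ hpossub hβ) with h | h
  · exact hne (by rw [hβ_eq, h, one_smul])
  · refine neg_notMem_of_mem_pos hindep hcoeff hpossub hzero hnonneg (hsimple a) ?_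
    rwa [hβ_eq, h, neg_one_smul] at hβ

theorem reflection_mem_erase_sroot [DecidableEq V] (hindep : LinearIndependent ℚ sroot)
    (hC : ∀ a b, (C a b : ℚ) = cpair a (sroot b)) (hCdiag : ∀ a, C a a = 2)
    (hs : ∀ a v, s a v = v - cpair a v • sroot a) (hsimple : ∀ a, sroot a ∈ Φpos)
    (hpossub : Φpos ⊆ Φ) (hzero : (0 : V) ∉ Φ) (hsign : ∀ β ∈ Φ, β ∈ Φpos ∨ -β ∈ Φpos)
    (hcoeff : ∀ β ∈ Φ, β = ∑ b, coeff β b • sroot b) (hnonneg : ∀ β ∈ Φpos, ∀ b, 0 ≤ coeff β b)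
    (hred : ∀ β ∈ Φ, ∀ t : ℚ, t • β ∈ Φ → t = 1 ∨ t = -1) (hsΦ : ∀ a, ∀ β ∈ Φ, s a β ∈ Φ)
    {β : V} (hβ : β ∈ Φpos.erase (sroot a)) : s a β ∈ Φpos.erase (sroot a) := by
  classical
  obtain ⟨hne, hβpos⟩ := mem_erase.1 hβ
  obtain ⟨b, hba, hb⟩ :=
    exists_ne_coeff_pos_of_ne_sroot hindep hsimple hpossub hzero hcoeff hnonneg hred hβpos hne
  have hsβ := hsΦ a β (hpossub hβpos)
  refine mem_erase.2 ⟨fun h => ?_, (hsign _ hsβ).resolve_right fun hneg => ?_⟩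
  · refine neg_notMem_of_mem_pos hindep hcoeff hpossub hzero hnonneg (hsimple a) ?_
    rwa [← reflection_sroot_self hC hCdiag hs, ← h, reflection_involutive hC hCdiag hs β]
  · have hnegb := hnonneg _ hneg b
    rw [coeff_neg hindep hcoeff hsβ (hpossub hneg), coeff_reflection hindep hC hs hcoeff hsΦ
      (hpossub hβpos)] at hnegb
    simp only [Pi.neg_apply, Pi.sub_apply, Pi.smul_apply, Pi.single_eq_of_ne hba, smul_zero,
      sub_zero] at hnegb
    omega

theorem prod_prod_zpow_neg_cartan {G : Type*} [DecidableEq V] [CommGroupWithZero G] {x : V → G}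
    (hx : ∀ α ∈ Φpos, x α ≠ 0) (hindep : LinearIndependent ℚ sroot)
    (hC : ∀ a b, (C a b : ℚ) = cpair a (sroot b)) (hCdiag : ∀ a, C a a = 2)
    (hCoff : ∀ a b, a ≠ b → C a b ≤ 0) (hs : ∀ a v, s a v = v - cpair a v • sroot a)
    (hsimple : ∀ a, sroot a ∈ Φpos) (hpossub : Φpos ⊆ Φ)
    (hcoeff : ∀ β ∈ Φ, β = ∑ b, coeff β b • sroot b) (hsΦ : ∀ a, ∀ β ∈ Φ, s a β ∈ Φ) :
    ∏ b ∈ univ.filter (fun b => C a b < 0), (∏ α ∈ Φpos, x α ^ (-coeff α b)) ^ (-C a b)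
      = (∏ β ∈ Φpos.erase (sroot a), x β ^ (-coeff β a))
        * ∏ β ∈ Φpos.erase (sroot a), x β ^ (-coeff (s a β) a) := by
  classical
  have hexp_sroot : ∑ b ∈ univ.filter (fun b => C a b < 0), -coeff (sroot a) b * -C a b = 0 := by
    simp only [neg_mul_neg, sum_filter_cartan_neg hCdiag hCoff,
      coeff_sroot hindep hcoeff (hpossub (hsimple a))]
    simp [Pi.single_apply, hCdiag]
  rw [prod_prod_zpow_zpow hx, ← mul_prod_erase _ _ (hsimple a), hexp_sroot, zpow_zero, one_mul,
    ← prod_mul_distrib]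
  refine prod_congr rfl fun β hβ => ?_
  rw [← zpow_add₀ (hx β (mem_of_mem_erase hβ)), ← neg_add,
    coeff_add_coeff_reflection_self hindep hC hCdiag hCoff hs hcoeff hsΦ
      (hpossub (mem_of_mem_erase hβ))]
  simp only [neg_mul_neg, neg_neg]

end PositiveRoots

theorem MY_limit_product_satisfies_QQtilde_relation_general
    {I V : Type*} [Fintype I]
    [AddCommGroup V] [Module ℚ V]
    (Φ Φpos : Finset V) (sroot : I → V) (cpair : I → V →ₗ[ℚ] ℚ)
    (coeff : V → I → ℤ) (C : I → I → ℤ) (s : I → V ≃ₗ[ℚ] V)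
    -- axioms of a reduced crystallographic root system with base:
    (hindep : LinearIndependent ℚ sroot)
    (hC : ∀ a b, (C a b : ℚ) = cpair a (sroot b))
    (hCdiag : ∀ a, C a a = 2)
    (hCoff : ∀ a b, a ≠ b → C a b ≤ 0)
    (hs : ∀ a v, s a v = v - cpair a v • sroot a)
    (hsimple : ∀ a, sroot a ∈ Φpos)
    (hpossub : Φpos ⊆ Φ)
    (hzero : (0 : V) ∉ Φ)
    (hsign : ∀ β ∈ Φ, β ∈ Φpos ∨ -β ∈ Φpos)
    (hcoeff : ∀ β ∈ Φ, β = ∑ b, coeff β b • sroot b)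
    (hnonneg : ∀ β ∈ Φpos, ∀ b, 0 ≤ coeff β b)
    (hred : ∀ β ∈ Φ, ∀ t : ℚ, t • β ∈ Φ → t = 1 ∨ t = -1)
    (hsΦ : ∀ a, ∀ β ∈ Φ, s a β ∈ Φ)
    -- the family `Ω a = ∏_{α ∈ Φ⁺} (1 - e^{-α})^{-[α]_a}` in `K`:
    (Ω : I → FractionRing (AddMonoidAlgebra ℤ V))
    (hΩ : ∀ a, Ω a = ∏ α ∈ Φpos, (1 - expK (-α)) ^ (-(coeff α a)))
    (a : I) :
    (1 - expK (sroot a)) * (1 - expK (-(sroot a))) * Ω a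
        * weylAutK (s a).toAddEquiv (Ω a)
      = ∏ b ∈ Finset.univ.filter (fun b => C a b < 0), Ω b ^ (-(C a b)) := by
  classical
  have hne_zero : ∀ α ∈ Φ, α ≠ 0 := fun α hα h => hzero (h ▸ hα)
  have hx : ∀ α ∈ Φpos, (1 - expK (-α) : FractionRing (AddMonoidAlgebra ℤ V)) ≠ 0 :=
    fun α hα => one_sub_expK_ne_zero (neg_ne_zero.2 (hne_zero α (hpossub hα)))
  have hsroot_ne_zero := one_sub_expK_ne_zero (hne_zero _ (hpossub (hsimple a)))
  have hneg_sroot_ne_zero := hx _ (hsimple a)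
  have hcoeff_sroot : coeff (sroot a) a = 1 := by
    simp [coeff_sroot hindep hcoeff (hpossub (hsimple a))]
  simp only [hΩ]
  rw [weylAutK_prod_one_sub_expK_neg_zpow_of_reflection (hsimple a)
      (reflection_sroot_self hC hCdiag hs) (reflection_involutive hC hCdiag hs)
      (fun β => reflection_mem_erase_sroot hindep hC hCdiag hs hsimple hpossub hzero hsign hcoeff
        hnonneg hred hsΦ),
    prod_prod_zpow_neg_cartan hx hindep hC hCdiag hCoff hs hsimple hpossub hcoeff hsΦ,
    ← mul_prod_erase _ _ (hsimple a), hcoeff_sroot]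
  simp only [LinearEquiv.coe_toAddEquiv, LinearEquiv.coe_addEquiv_apply]
  field_simp

theorem MY_limit_product_satisfies_QQtilde_relation
    {I V : Type*} [Fintype I] [DecidableEq I]
    [AddCommGroup V] [Module ℚ V] [FiniteDimensional ℚ V]
    (Φ Φpos : Finset V) (sroot : I → V) (cpair : I → V →ₗ[ℚ] ℚ)
    (coeff : V → I → ℤ) (C : I → I → ℤ) (s : I → V ≃ₗ[ℚ] V)
    -- axioms of a reduced crystallographic root system with base:
    (hindep : LinearIndependent ℚ sroot)
    (hspan : Submodule.span ℚ (Set.range sroot) = ⊤)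
    (hC : ∀ a b, (C a b : ℚ) = cpair a (sroot b))
    (hCdiag : ∀ a, C a a = 2)
    (hCoff : ∀ a b, a ≠ b → C a b ≤ 0)
    (hs : ∀ a v, s a v = v - cpair a v • sroot a)
    (hsimple : ∀ a, sroot a ∈ Φpos)
    (hpossub : Φpos ⊆ Φ)
    (hzero : (0 : V) ∉ Φ)
    (hsymm : ∀ β ∈ Φ, -β ∈ Φ)
    (hsign : ∀ β ∈ Φ, β ∈ Φpos ∨ -β ∈ Φpos)
    (hcoeff : ∀ β ∈ Φ, β = ∑ b, coeff β b • sroot b)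
    (hnonneg : ∀ β ∈ Φpos, ∀ b, 0 ≤ coeff β b)
    (hred : ∀ β ∈ Φ, ∀ t : ℚ, t • β ∈ Φ → t = 1 ∨ t = -1)
    (hsΦ : ∀ a, ∀ β ∈ Φ, s a β ∈ Φ)
    -- the family `Ω a = ∏_{α ∈ Φ⁺} (1 - e^{-α})^{-[α]_a}` in `K`:
    (Ω : I → FractionRing (AddMonoidAlgebra ℤ V))
    (hΩ : ∀ a, Ω a = ∏ α ∈ Φpos, (1 - expK (-α)) ^ (-(coeff α a)))
    (a : I) :
    (1 - expK (sroot a)) * (1 - expK (-(sroot a))) * Ω a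
        * weylAutK (s a).toAddEquiv (Ω a)
      = ∏ b ∈ Finset.univ.filter (fun b => C a b < 0), Ω b ^ (-(C a b)) :=
  MY_limit_product_satisfies_QQtilde_relation_general Φ Φpos sroot cpair coeff C s hindep hC hCdiag
    hCoff hs hsimple hpossub hzero hsign hcoeff hnonneg hred hsΦ Ω hΩ a
end

section
/- Let a ∈ I and let Π ⊆ P be a saturated set of weights with highest weight the fundamental weight ω_a. Then every λ ∈ Π with λ ≠ ω_a satisfies λ ⪯ ω_a − α_a = s_a(ω_a); that is, ω_a − α_a − λ is a nonnegative integer combination of the simple roots. (In particular, every weight λ ≠ ω_a of the irreducible highest-weight representation L(ω_a) of a complex simple Lie algebra satisfies s_a(ω_a) ⪰ λ.) -/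
/-!
Write `ω - λ = ∑ k_c α_c`; it suffices to show `k_a ≥ 1`. If `k_a = 0` but `k ≠ 0`, positivity of
`(β, β) = ∑ k_c (β, α_c)` for `β = ω - λ` yields `b` with `k_b > 0` and `(β, α_b) > 0`. Then `b ≠ a`,
so `⟨λ, α_b^∨⟩ = -⟨β, α_b^∨⟩ < 0` and saturation puts `λ + α_b` in `S`, one step higher. Descending
on the height of `k`, one reaches `ω - α_b ∈ S` with `b ≠ a`; but its reflection
`s_b(ω - α_b) = ω + α_b` is then in `S`, which is impossible below `ω`.
-/

open Finset

section NatCombination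

variable {I R V : Type*} [Ring R] [AddCommGroup V] [Module R V]

lemma exists_eq_add_single_of_pos [DecidableEq I] {k : I → ℕ} {b : I} (hb : 0 < k b) :
    ∃ k' : I → ℕ, k = k' + Pi.single b 1 := by
  refine ⟨k - Pi.single b 1, funext fun c => ?_⟩
  rcases eq_or_ne c b with rfl | hcb
  · simp only [Pi.add_apply, Pi.sub_apply, Pi.single_eq_same]; omega
  · simp [hcb]

lemma sum_natCast_add_single_smul [Fintype I] [DecidableEq I] (v : I → V) (k : I → ℕ) (b : I) :
    ∑ c, ((k + Pi.single b 1 : I → ℕ) c : R) • v c = ∑ c, (k c : R) • v c + v b := by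
  simp [Pi.single_apply, add_smul, sum_add_distrib]

lemma LinearIndependent.sum_natCast_smul_eq_zero_iff [Fintype I] [CharZero R] {v : I → V}
    (hv : LinearIndependent R v) {k : I → ℕ} :
    ∑ c, (k c : R) • v c = 0 ↔ k = 0 := by
  refine ⟨fun h => funext fun c => ?_, fun h => by simp [h]⟩
  exact_mod_cast Fintype.linearIndependent_iff.mp hv _ h c

lemma LinearIndependent.neg_ne_sum_natCast_smul [Fintype I] [CharZero R] {v : I → V}
    (hv : LinearIndependent R v) (k : I → ℕ) (b : I) :
    -v b ≠ ∑ c, (k c : R) • v c := by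
  classical
  intro h
  have := congrFun (hv.sum_natCast_smul_eq_zero_iff.mp <|
    (sum_natCast_add_single_smul v k b).trans (by rw [← h, neg_add_cancel])) b
  simp at this

end NatCombination

lemma exists_pos_coeff_and_pos_of_pos_self {I 𝕜 V : Type*} [Fintype I] [Field 𝕜] [LinearOrder 𝕜]
    [IsStrictOrderedRing 𝕜] [AddCommGroup V] [Module 𝕜 V] (B : V →ₗ[𝕜] V →ₗ[𝕜] 𝕜)
    (v : I → V) (k : I → 𝕜) (hk : ∀ c, 0 ≤ k c)
    (hpos : 0 < B (∑ c, k c • v c) (∑ c, k c • v c)) :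
    ∃ b, 0 < k b ∧ 0 < B (∑ c, k c • v c) (v b) := by
  set β := ∑ c, k c • v c
  rw [show B β β = B β (∑ c, k c • v c) from rfl, map_sum] at hpos
  obtain ⟨b, -, hb⟩ := exists_lt_of_sum_lt (f := fun _ => 0)
    (by rwa [sum_const_zero] : ∑ _ : I, 0 < ∑ c, B β (k c • v c))
  rw [map_smul, smul_eq_mul] at hb
  exact ⟨b, (pos_and_pos_or_neg_and_neg_of_mul_pos hb).resolve_right
    fun h => (hk b).not_gt h.1⟩

section Saturated

variable {V : Type*} [AddCommGroup V] [Module ℚ V] {B : V →ₗ[ℚ] V →ₗ[ℚ] ℚ}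
  {pairD : V → V → ℚ} {Φ : Finset V} {S : Set V}

lemma pairD_sub (hpair : ∀ x y, pairD x y * B y y = 2 * B x y) {α : V} (hα : B α α ≠ 0)
    (x y : V) : pairD (x - y) α = pairD x α - pairD y α :=
  mul_right_cancel₀ hα <| by
    rw [sub_mul, hpair, hpair, hpair, map_sub, LinearMap.sub_apply, mul_sub]

lemma pairD_self (hpair : ∀ x y, pairD x y * B y y = 2 * B x y) {α : V} (hα : B α α ≠ 0) :
    pairD α α = 2 :=
  mul_right_cancel₀ hα (hpair α α)

lemma pairD_pos (hpair : ∀ x y, pairD x y * B y y = 2 * B x y) {x α : V} (hα : 0 < B α α)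
    (hx : 0 < B x α) : 0 < pairD x α :=
  pos_of_mul_pos_left (by rw [hpair]; positivity) hα.le

def IsSaturated (Φ : Finset V) (pairD : V → V → ℚ) (S : Set V) : Prop :=
  ∀ lam ∈ S, ∀ alf ∈ Φ, ∀ i : ℤ,
    ((0 ≤ (i : ℚ) ∧ (i : ℚ) ≤ pairD lam alf) ∨ (pairD lam alf ≤ (i : ℚ) ∧ (i : ℚ) ≤ 0)) →
    lam - (i : ℚ) • alf ∈ S

lemma IsSaturated.sub_smul_mem (hS : IsSaturated Φ pairD S) {lam α : V} (hlam : lam ∈ S)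
    (hα : α ∈ Φ) {n : ℤ} (hn : pairD lam α = n) : lam - (n : ℚ) • α ∈ S :=
  hS lam hlam α hα n <| (le_total 0 (n : ℚ)).imp (fun h => ⟨h, hn.ge⟩) fun h => ⟨hn.le, h⟩

lemma IsSaturated.add_mem_of_pairD_neg (hS : IsSaturated Φ pairD S) {lam α : V}
    (hlam : lam ∈ S) (hα : α ∈ Φ) {n : ℤ} (hn : pairD lam α = n) (hneg : pairD lam α < 0) :
    lam + α ∈ S := by
  have hn1 : (n : ℚ) ≤ -1 := by
    have : n < 0 := by exact_mod_cast hn ▸ hneg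
    exact_mod_cast (by omega : n ≤ -1)
  simpa using hS lam hlam α hα (-1) (Or.inr ⟨by rw [hn]; push_cast; exact hn1, by norm_num⟩)

end Saturated

section HighestWeight

variable {I V : Type*} [Fintype I] [AddCommGroup V] [Module ℚ V]
  {B : V →ₗ[ℚ] V →ₗ[ℚ] ℚ} {pairD : V → V → ℚ} {Φ : Finset V} {S : Set V} {sroot : I → V}
  {ω : V}

lemma sub_simpleRoot_notMem (hpair : ∀ x y, pairD x y * B y y = 2 * B x y)
    (hBpos : ∀ x : V, x ≠ 0 → 0 < B x x) (hindep : LinearIndependent ℚ sroot)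
    (hsimple : ∀ b, sroot b ∈ Φ) (hS : IsSaturated Φ pairD S)
    (hhw : ∀ lam ∈ S, ∃ k : I → ℕ, ω - lam = ∑ b, (k b : ℚ) • sroot b)
    {b : I} (hωb : pairD ω (sroot b) = 0) : ω - sroot b ∉ S := by
  intro hmem
  have hBb := (hBpos _ (hindep.ne_zero b)).ne'
  have hpair2 : pairD (ω - sroot b) (sroot b) = ((-2 : ℤ) : ℚ) := by
    rw [pairD_sub hpair hBb, hωb, pairD_self hpair hBb]; norm_num
  have hrefl := hS.sub_smul_mem hmem (hsimple b) hpair2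
  obtain ⟨k, hk⟩ := hhw _ hrefl
  refine hindep.neg_ne_sum_natCast_smul k b (Eq.trans ?_ hk)
  push_cast
  module

lemma exists_add_single_mem [DecidableEq I] (hpair : ∀ x y, pairD x y * B y y = 2 * B x y)
    (hBpos : ∀ x : V, x ≠ 0 → 0 < B x x) (hindep : LinearIndependent ℚ sroot)
    (hsimple : ∀ b, sroot b ∈ Φ) (hSP : ∀ lam ∈ S, ∀ alf ∈ Φ, ∃ n : ℤ, pairD lam alf = n)
    (hS : IsSaturated Φ pairD S) {a : I} (hω : ∀ b ≠ a, pairD ω (sroot b) = 0)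
    {k : I → ℕ} (hka : k a = 0) (hk : k ≠ 0) (hmem : ω - ∑ c, (k c : ℚ) • sroot c ∈ S) :
    ∃ b ≠ a, ∃ k' : I → ℕ, k = k' + Pi.single b 1 ∧ ω - ∑ c, (k' c : ℚ) • sroot c ∈ S := by
  set β := ∑ c, (k c : ℚ) • sroot c
  have hβ : β ≠ 0 := fun h => hk (hindep.sum_natCast_smul_eq_zero_iff.mp h)
  obtain ⟨b, hkb, hBβb⟩ :=
    exists_pos_coeff_and_pos_of_pos_self B sroot (fun c => (k c : ℚ)) (fun c => by positivity)
      (hBpos β hβ)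
  have hba : b ≠ a := by rintro rfl; simp [hka] at hkb
  obtain ⟨k', rfl⟩ := exists_eq_add_single_of_pos (by exact_mod_cast hkb : 0 < k b)
  have hBb := hBpos _ (hindep.ne_zero b)
  have hneg : pairD (ω - β) (sroot b) < 0 := by
    rw [pairD_sub hpair hBb.ne', hω b hba, zero_sub, neg_lt_zero]
    exact pairD_pos hpair hBb hBβb
  obtain ⟨n, hn⟩ := hSP _ hmem _ (hsimple b)
  refine ⟨b, hba, k', rfl, ?_⟩
  have := hS.add_mem_of_pairD_neg hmem (hsimple b) hn hneg
  rwa [show β = _ from sum_natCast_add_single_smul sroot k' b, sub_add_eq_sub_sub,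
    sub_add_cancel] at this

lemma eq_zero_of_sub_sum_mem [DecidableEq I] (hpair : ∀ x y, pairD x y * B y y = 2 * B x y)
    (hBpos : ∀ x : V, x ≠ 0 → 0 < B x x) (hindep : LinearIndependent ℚ sroot)
    (hsimple : ∀ b, sroot b ∈ Φ) (hSP : ∀ lam ∈ S, ∀ alf ∈ Φ, ∃ n : ℤ, pairD lam alf = n)
    (hS : IsSaturated Φ pairD S)
    (hhw : ∀ lam ∈ S, ∃ k : I → ℕ, ω - lam = ∑ b, (k b : ℚ) • sroot b)
    {a : I} (hω : ∀ b ≠ a, pairD ω (sroot b) = 0) (k : I → ℕ) :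
    k a = 0 → ω - ∑ c, (k c : ℚ) • sroot c ∈ S → k = 0 := by
  induction k using WellFoundedLT.induction with
  | _ k ih =>
  intro hka hmem
  by_contra hk
  obtain ⟨b, hba, k', rfl, hmem'⟩ :=
    exists_add_single_mem hpair hBpos hindep hsimple hSP hS hω hka hk hmem
  have hk' : k' = 0 := ih k' (lt_add_of_pos_right _ (by simpa [Pi.lt_def] using ⟨b, by simp⟩))
    (by simpa [hba.symm] using hka) hmem'
  subst hk'
  refine sub_simpleRoot_notMem hpair hBpos hindep hsimple hS hhw (hω b hba) ?_
  rw [sum_natCast_add_single_smul] at hmem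
  simpa using hmem

end HighestWeight

theorem saturated_set_highest_weight_fundamental_le_sub_simple_general
    {I V : Type*} [Fintype I] [DecidableEq I]
    [AddCommGroup V] [Module ℚ V]
    (Φ : Finset V)                  -- the roots
    (sroot : I → V)                 -- the simple roots
    (B : V →ₗ[ℚ] V →ₗ[ℚ] ℚ)         -- inner product induced by the Killing form
    (hBpos : ∀ x : V, x ≠ 0 → 0 < B x x)
    (hindep : LinearIndependent ℚ sroot)
    (hsimple : ∀ b, sroot b ∈ Φ)
    -- the coroot pairing `pairD λ α = ⟨λ, α^∨⟩ = 2(λ,α)/(α,α)`: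
    (pairD : V → V → ℚ)
    (hpair : ∀ lam alf, pairD lam alf * B alf alf = 2 * B lam alf)
    -- `S` is a saturated set of weights:
    (S : Set V)
    (hSP : ∀ lam ∈ S, ∀ alf ∈ Φ, ∃ n : ℤ, pairD lam alf = n)   -- `S ⊆ P`
    (hsat : ∀ lam ∈ S, ∀ alf ∈ Φ, ∀ i : ℤ,
        ((0 ≤ (i : ℚ) ∧ (i : ℚ) ≤ pairD lam alf) ∨
         (pairD lam alf ≤ (i : ℚ) ∧ (i : ℚ) ≤ 0)) →
        lam - (i : ℚ) • alf ∈ S)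
    -- the fundamental weight `ω = ω_a`:
    (a : I) (ω : V) (hω : ∀ b, pairD ω (sroot b) = if b = a then 1 else 0)
    -- `S` has highest weight `ω`:
    (hhw : ∀ lam ∈ S, ∃ k : I → ℕ, ω - lam = ∑ b, (k b : ℚ) • sroot b) :
    ∀ lam ∈ S, lam ≠ ω →
      ∃ k : I → ℕ, (ω - sroot a) - lam = ∑ b, (k b : ℚ) • sroot b := by
  intro lam hlam hne
  obtain ⟨k, hk⟩ := hhw lam hlam
  have hka : k a ≠ 0 := fun hka => hne <| by
    have hk0 := eq_zero_of_sub_sum_mem hpair hBpos hindep hsimple hSP hsat hhw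
      (fun b hb => by rw [hω, if_neg hb]) k hka (by rwa [← hk, sub_sub_cancel])
    simpa [hk0, sub_eq_zero, eq_comm] using hk
  obtain ⟨k', rfl⟩ := exists_eq_add_single_of_pos (Nat.pos_of_ne_zero hka)
  refine ⟨k', ?_⟩
  rw [sum_natCast_add_single_smul] at hk
  rw [sub_right_comm, hk, add_sub_cancel_right]

theorem saturated_set_highest_weight_fundamental_le_sub_simple
    {I V : Type*} [Fintype I] [DecidableEq I]
    [AddCommGroup V] [Module ℚ V] [FiniteDimensional ℚ V]
    (Φ : Finset V)                  -- the roots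
    (sroot : I → V)                 -- the simple roots
    (B : V →ₗ[ℚ] V →ₗ[ℚ] ℚ)         -- inner product induced by the Killing form
    (hBsymm : ∀ x y, B x y = B y x)
    (hBpos : ∀ x : V, x ≠ 0 → 0 < B x x)
    (hindep : LinearIndependent ℚ sroot)
    (hzero : (0 : V) ∉ Φ)
    (hsimple : ∀ b, sroot b ∈ Φ)
    -- the coroot pairing `pairD λ α = ⟨λ, α^∨⟩ = 2(λ,α)/(α,α)`:
    (pairD : V → V → ℚ)
    (hpair : ∀ lam alf, pairD lam alf * B alf alf = 2 * B lam alf)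
    -- `S` is a saturated set of weights:
    (S : Set V)
    (hSP : ∀ lam ∈ S, ∀ alf ∈ Φ, ∃ n : ℤ, pairD lam alf = n)   -- `S ⊆ P`
    (hsat : ∀ lam ∈ S, ∀ alf ∈ Φ, ∀ i : ℤ,
        ((0 ≤ (i : ℚ) ∧ (i : ℚ) ≤ pairD lam alf) ∨
         (pairD lam alf ≤ (i : ℚ) ∧ (i : ℚ) ≤ 0)) →
        lam - (i : ℚ) • alf ∈ S)
    -- the fundamental weight `ω = ω_a`:
    (a : I) (ω : V) (hω : ∀ b, pairD ω (sroot b) = if b = a then 1 else 0)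
    -- `S` has highest weight `ω`:
    (hωS : ω ∈ S)
    (hhw : ∀ lam ∈ S, ∃ k : I → ℕ, ω - lam = ∑ b, (k b : ℚ) • sroot b) :
    ∀ lam ∈ S, lam ≠ ω →
      ∃ k : I → ℕ, (ω - sroot a) - lam = ∑ b, (k b : ℚ) • sroot b :=
  saturated_set_highest_weight_fundamental_le_sub_simple_general Φ sroot B hBpos hindep hsimple
    pairD hpair S hSP hsat a ω hω hhw
end
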